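/- arXiv:2411.16424 — 3 statements merged into one kernel-verified Lean document; each statement's English description precedes it below -/
import Mathlib

section
/- Let s ∈ (0,1), let n ≥ 1 be a natural number, and let ν ∈ ℝ. Define Θ_s(z) := 2^{2s} Γ(z/2) Γ((n+2s−z)/2) / (Γ((n−z)/2) Γ((z−2s)/2)) and ũ_ν(z) := 2^z Γ(ν+(n−z)/(2s)) Γ(z/2) / Γ((n−z)/2), where Γ is the complex Gamma function. Then for every z ∈ ℂ such that none of the numbers z/2, (z−2s)/2, (n−z)/2, (n+2s−z)/2, ν+(n−z)/(2s), ν+(n−z)/(2s)+1 is a nonpositive integer, one has Θ_s(z) · ũ_ν(z−2s) = (ν + (n−z)/(2s)) · ũ_ν(z). -/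
/-- The Mellin symbol identity `Θ_s(z) · ũ_ν(z−2s) = (ν + (n−z)/(2s)) · ũ_ν(z)`
for the candidate eigenfunction of the Lévy Fokker–Planck operator. -/
theorem levy_FP_mellin_eigen_identity
    (s : ℝ) (hs : s ∈ Set.Ioo (0:ℝ) 1) (n : ℕ) (hn : 1 ≤ n) (ν : ℝ)
    (Θ u : ℂ → ℂ)
    (hΘ : ∀ z : ℂ, Θ z = 2 ^ (2*(s:ℂ)) * Complex.Gamma (z/2) *
        Complex.Gamma (((n:ℂ) + 2*(s:ℂ) - z)/2) /
        (Complex.Gamma (((n:ℂ) - z)/2) * Complex.Gamma ((z - 2*(s:ℂ))/2)))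
    (hu : ∀ z : ℂ, u z = 2 ^ z * Complex.Gamma ((ν:ℂ) + ((n:ℂ) - z)/(2*(s:ℂ))) *
        Complex.Gamma (z/2) / Complex.Gamma (((n:ℂ) - z)/2))
    (z : ℂ)
    (h1 : ∀ m : ℕ, z/2 ≠ -(m:ℂ))
    (h2 : ∀ m : ℕ, (z - 2*(s:ℂ))/2 ≠ -(m:ℂ))
    (h3 : ∀ m : ℕ, ((n:ℂ) - z)/2 ≠ -(m:ℂ))
    (h4 : ∀ m : ℕ, ((n:ℂ) + 2*(s:ℂ) - z)/2 ≠ -(m:ℂ))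
    (h5 : ∀ m : ℕ, (ν:ℂ) + ((n:ℂ) - z)/(2*(s:ℂ)) ≠ -(m:ℂ))
    (h6 : ∀ m : ℕ, (ν:ℂ) + ((n:ℂ) - z)/(2*(s:ℂ)) + 1 ≠ -(m:ℂ)) :
    Θ z * u (z - 2*(s:ℂ)) = ((ν:ℂ) + ((n:ℂ) - z)/(2*(s:ℂ))) * u z := by
  obtain ⟨hs0, _⟩ := hs
  have hsC : (s:ℂ) ≠ 0 := by exact_mod_cast hs0.ne'
  have hA : Complex.Gamma (z/2) ≠ 0 := Complex.Gamma_ne_zero h1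
  have hB : Complex.Gamma ((z - 2*(s:ℂ))/2) ≠ 0 := Complex.Gamma_ne_zero h2
  have hC : Complex.Gamma (((n:ℂ) - z)/2) ≠ 0 := Complex.Gamma_ne_zero h3
  have hD : Complex.Gamma (((n:ℂ) + 2*(s:ℂ) - z)/2) ≠ 0 := Complex.Gamma_ne_zero h4
  have hν0 : (ν:ℂ) + ((n:ℂ) - z)/(2*(s:ℂ)) ≠ 0 := by
    have := h5 0; simpa using this
  have e1 : ((n:ℂ) - (z - 2*(s:ℂ)))/2 = ((n:ℂ) + 2*(s:ℂ) - z)/2 := by ring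
  have e2 : (ν:ℂ) + ((n:ℂ) - (z - 2*(s:ℂ)))/(2*(s:ℂ))
      = ((ν:ℂ) + ((n:ℂ) - z)/(2*(s:ℂ))) + 1 := by
    field_simp
    ring
  have e3 : Complex.Gamma ((ν:ℂ) + ((n:ℂ) - (z - 2*(s:ℂ)))/(2*(s:ℂ)))
      = ((ν:ℂ) + ((n:ℂ) - z)/(2*(s:ℂ))) * Complex.Gamma ((ν:ℂ) + ((n:ℂ) - z)/(2*(s:ℂ))) := by
    rw [e2, Complex.Gamma_add_one _ hν0]
  have e4 : (2:ℂ) ^ (2*(s:ℂ)) * (2:ℂ) ^ (z - 2*(s:ℂ)) = (2:ℂ) ^ z := by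
    rw [← Complex.cpow_add _ _ two_ne_zero]
    ring_nf
  rw [hΘ, hu, hu, e1, e3]
  set K := (ν:ℂ) + ((n:ℂ) - z)/(2*(s:ℂ)) with hK
  set G1 := Complex.Gamma (z/2)
  set G2 := Complex.Gamma ((z - 2*(s:ℂ))/2)
  set G3 := Complex.Gamma (((n:ℂ) - z)/2)
  set G4 := Complex.Gamma (((n:ℂ) + 2*(s:ℂ) - z)/2)
  set G5 := Complex.Gamma K
  field_simp
  linear_combination G5 * e4
end

section
/- Let n ≥ 1 be a natural number and s ∈ (0, n/2). Then for every λ ∈ ℝ, Θ_{s/2}(n/2 + λi) · Θ_{s/2}(n/2 − λi) = Θ_s(n/2 + s + λi), where for σ > 0 the symbol is Θ_σ(z) := 2^{2σ} Γ(z/2) Γ((n+2σ−z)/2) / (Γ((n−z)/2) Γ((z−2σ)/2)). -/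
open Complex

lemma gamma_ne_zero_aux (x y : ℝ) (hx : 0 < x) :
    Complex.Gamma ((x:ℂ) + (y:ℂ)*Complex.I) ≠ 0 := by
  apply Complex.Gamma_ne_zero_of_re_pos
  simpa using hx

/-- The doubling identity for the Mellin symbol of the fractional Laplacian:
`Θ_{s/2}(n/2 + λi) · Θ_{s/2}(n/2 − λi) = Θ_s(n/2 + s + λi)` for all `λ ∈ ℝ`. -/
theorem mellin_symbol_doubling
    (n : ℕ) (hn : 1 ≤ n) (s : ℝ) (hs : s ∈ Set.Ioo (0:ℝ) ((n:ℝ)/2))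
    (Θ : ℝ → ℂ → ℂ)
    (hΘ : ∀ σ : ℝ, 0 < σ → ∀ z : ℂ, Θ σ z = 2 ^ (2*(σ:ℂ)) * Complex.Gamma (z/2) *
        Complex.Gamma (((n:ℂ) + 2*(σ:ℂ) - z)/2) /
        (Complex.Gamma (((n:ℂ) - z)/2) * Complex.Gamma ((z - 2*(σ:ℂ))/2))) :
    ∀ lam : ℝ,
      Θ (s/2) ((n:ℂ)/2 + (lam:ℂ)*Complex.I) * Θ (s/2) ((n:ℂ)/2 - (lam:ℂ)*Complex.I)
        = Θ s ((n:ℂ)/2 + (s:ℂ) + (lam:ℂ)*Complex.I) := by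
  obtain ⟨hs0, hsn⟩ := hs
  intro lam
  have hn4 : (0:ℝ) < n/4 := by
    have : (1:ℝ) ≤ n := by exact_mod_cast hn
    linarith
  have hns : (0:ℝ) < n/4 - s/2 := by linarith
  have hcs : (0:ℝ) < n/4 + s/2 := by linarith
  rw [hΘ (s/2) (by linarith), hΘ (s/2) (by linarith), hΘ s hs0]
  have e1 : ((n:ℂ)/2 + (lam:ℂ)*Complex.I)/2
      = ((↑(n/4 : ℝ) : ℂ) + (↑(lam/2 : ℝ))*Complex.I) := by push_cast; ring
  have e2 : ((n:ℂ) + 2*((↑(s/2):ℂ)) - ((n:ℂ)/2 + (lam:ℂ)*Complex.I))/2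
      = ((↑(n/4 + s/2 : ℝ) : ℂ) + (↑(-(lam/2) : ℝ))*Complex.I) := by push_cast; ring
  have e3 : ((n:ℂ) - ((n:ℂ)/2 + (lam:ℂ)*Complex.I))/2
      = ((↑(n/4 : ℝ) : ℂ) + (↑(-(lam/2) : ℝ))*Complex.I) := by push_cast; ring
  have e4 : (((n:ℂ)/2 + (lam:ℂ)*Complex.I) - 2*((↑(s/2):ℂ)))/2
      = ((↑(n/4 - s/2 : ℝ) : ℂ) + (↑(lam/2 : ℝ))*Complex.I) := by push_cast; ring
  have f1 : ((n:ℂ)/2 - (lam:ℂ)*Complex.I)/2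
      = ((↑(n/4 : ℝ) : ℂ) + (↑(-(lam/2) : ℝ))*Complex.I) := by push_cast; ring
  have f2 : ((n:ℂ) + 2*((↑(s/2):ℂ)) - ((n:ℂ)/2 - (lam:ℂ)*Complex.I))/2
      = ((↑(n/4 + s/2 : ℝ) : ℂ) + (↑(lam/2 : ℝ))*Complex.I) := by push_cast; ring
  have f3 : ((n:ℂ) - ((n:ℂ)/2 - (lam:ℂ)*Complex.I))/2
      = ((↑(n/4 : ℝ) : ℂ) + (↑(lam/2 : ℝ))*Complex.I) := by push_cast; ring
  have f4 : (((n:ℂ)/2 - (lam:ℂ)*Complex.I) - 2*((↑(s/2):ℂ)))/2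
      = ((↑(n/4 - s/2 : ℝ) : ℂ) + (↑(-(lam/2) : ℝ))*Complex.I) := by push_cast; ring
  have g1 : ((n:ℂ)/2 + (s:ℂ) + (lam:ℂ)*Complex.I)/2
      = ((↑(n/4 + s/2 : ℝ) : ℂ) + (↑(lam/2 : ℝ))*Complex.I) := by push_cast; ring
  have g2 : ((n:ℂ) + 2*((s:ℝ):ℂ) - ((n:ℂ)/2 + (s:ℂ) + (lam:ℂ)*Complex.I))/2
      = ((↑(n/4 + s/2 : ℝ) : ℂ) + (↑(-(lam/2) : ℝ))*Complex.I) := by push_cast; ring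
  have g3 : ((n:ℂ) - ((n:ℂ)/2 + (s:ℂ) + (lam:ℂ)*Complex.I))/2
      = ((↑(n/4 - s/2 : ℝ) : ℂ) + (↑(-(lam/2) : ℝ))*Complex.I) := by push_cast; ring
  have g4 : (((n:ℂ)/2 + (s:ℂ) + (lam:ℂ)*Complex.I) - 2*((s:ℝ):ℂ))/2
      = ((↑(n/4 - s/2 : ℝ) : ℂ) + (↑(lam/2 : ℝ))*Complex.I) := by push_cast; ring
  rw [e1, e2, e3, e4, f1, f2, f3, f4, g1, g2, g3, g4]
  have hpow : (2:ℂ) ^ (2*((↑(s/2):ℝ):ℂ)) * (2:ℂ) ^ (2*((↑(s/2):ℝ):ℂ))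
      = (2:ℂ) ^ (2*((s:ℝ):ℂ)) := by
    rw [← Complex.cpow_add _ _ two_ne_zero]
    norm_num
    ring_nf
  have hA := gamma_ne_zero_aux (n/4) (lam/2) hn4
  have hB := gamma_ne_zero_aux (n/4) (-(lam/2)) hn4
  have hC := gamma_ne_zero_aux (n/4 - s/2) (lam/2) hns
  have hD := gamma_ne_zero_aux (n/4 - s/2) (-(lam/2)) hns
  have hP : (2:ℂ) ^ (2*((↑(s/2):ℝ):ℂ)) ≠ 0 := by
    simp [Complex.cpow_def]
  set P := (2:ℂ) ^ (2*((↑(s/2):ℝ):ℂ)) with hPdef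
  set Q := (2:ℂ) ^ (2*((s:ℝ):ℂ)) with hQdef
  set GA := Complex.Gamma ((↑(n/4:ℝ):ℂ) + (↑(lam/2:ℝ):ℂ)*Complex.I) with hGA
  set GB := Complex.Gamma ((↑(n/4:ℝ):ℂ) + (↑(-(lam/2):ℝ):ℂ)*Complex.I) with hGB
  set GCp := Complex.Gamma ((↑(n/4 + s/2:ℝ):ℂ) + (↑(lam/2:ℝ):ℂ)*Complex.I) with hGCp
  set GCm := Complex.Gamma ((↑(n/4 + s/2:ℝ):ℂ) + (↑(-(lam/2):ℝ):ℂ)*Complex.I) with hGCm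
  set GDp := Complex.Gamma ((↑(n/4 - s/2:ℝ):ℂ) + (↑(lam/2:ℝ):ℂ)*Complex.I) with hGDp
  set GDm := Complex.Gamma ((↑(n/4 - s/2:ℝ):ℂ) + (↑(-(lam/2):ℝ):ℂ)*Complex.I) with hGDm
  field_simp
  rw [← hpow]
  ring
end

section
/- For every σ > 0 there exists M ∈ ℕ such that for all natural numbers m ≥ M, setting R = 1/2 + 2m, for every θ ∈ ℝ with |θ| ≤ π/2 + arcsin(σ/R) one has |sin(π R e^{iθ})| ≥ (1/(2e)) · e^{π R |sin θ|}, where sin on the left is the complex sine function and e^{iθ} = cos θ + i sin θ. -/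
set_option maxHeartbeats 1000000

lemma abs_sin_complex_sq (x y : ℝ) :
    ‖Complex.sin ((x:ℂ) + (y:ℂ) * Complex.I)‖ ^ 2
      = Real.sin x ^ 2 + Real.sinh y ^ 2 := by
  rw [Complex.sin_add, Complex.sin_mul_I, Complex.cos_mul_I,
      ← Complex.ofReal_sin, ← Complex.ofReal_cos, ← Complex.ofReal_sinh, ← Complex.ofReal_cosh,
      ← mul_assoc, ← Complex.ofReal_mul, ← Complex.ofReal_mul, Complex.sq_norm,
      Complex.normSq_add_mul_I]
  nlinarith [Real.sin_sq_add_cos_sq x, Real.cosh_sq y]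

/-- For every `σ > 0` there exists `M ∈ ℕ` such that for all `m ≥ M`, with
`R = 1/2 + 2m`, one has `|sin(π R e^{iθ})| ≥ (1/(2e)) e^{π R |sin θ|}` for every
`θ` with `|θ| ≤ π/2 + arcsin(σ/R)`. -/
theorem complex_sin_lower_bound (σ : ℝ) (hσ : 0 < σ) :
    ∃ M : ℕ, ∀ m : ℕ, M ≤ m → ∀ θ : ℝ,
      |θ| ≤ Real.pi/2 + Real.arcsin (σ / (1/2 + 2*(m:ℝ))) →
      (1/(2*Real.exp 1)) * Real.exp (Real.pi * (1/2 + 2*(m:ℝ)) * |Real.sin θ|)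
        ≤ ‖(Complex.sin
            (((Real.pi * (1/2 + 2*(m:ℝ)) : ℝ) : ℂ) *
              Complex.exp ((θ:ℂ) * Complex.I)))‖ := by
  refine ⟨⌈σ⌉₊, fun m hm θ hθ => ?_⟩
  set R : ℝ := 1/2 + 2*(m:ℝ) with hRdef
  set a : ℝ := Real.pi * R with hadef
  have hpi := Real.pi_gt_three
  have hmσ : σ ≤ (m:ℝ) := le_trans (Nat.le_ceil σ) (by exact_mod_cast hm)
  have hR2σ : 2*σ ≤ R := by simp only [hRdef]; linarith
  have hR0 : 0 < R := by linarith
  have ha1 : 1 < a := by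
    have h12 : (1:ℝ)/2 ≤ R := by
      have : (0:ℝ) ≤ (m:ℝ) := Nat.cast_nonneg m
      simp only [hRdef]; linarith
    have h3 : (3:ℝ)/2 ≤ a := by
      rw [hadef]; nlinarith [mul_nonneg (le_of_lt (lt_trans three_pos hpi)) (le_of_lt hR0)]
    linarith
  have ha0 : 0 < a := by linarith
  have hz : ((a:ℝ):ℂ) * Complex.exp ((θ:ℂ) * Complex.I)
      = ((a * Real.cos θ : ℝ):ℂ) + ((a * Real.sin θ : ℝ):ℂ) * Complex.I := by
    rw [Complex.exp_mul_I, ← Complex.ofReal_cos, ← Complex.ofReal_sin]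
    push_cast; ring
  rw [hz]
  set A := ‖Complex.sin (((a * Real.cos θ : ℝ):ℂ) + ((a * Real.sin θ : ℝ):ℂ) * Complex.I)‖ with hA
  have hA0 : 0 ≤ A := norm_nonneg _
  have habs2 : A ^ 2 = Real.sin (a * Real.cos θ) ^ 2 + Real.sinh (a * Real.sin θ) ^ 2 :=
    abs_sin_complex_sq _ _
  set t : ℝ := a * |Real.sin θ| with htdef
  have ht0 : 0 ≤ t := by positivity
  have hsinh : Real.sinh (a * Real.sin θ) ^ 2 = Real.sinh t ^ 2 := by
    rcases abs_cases (Real.sin θ) with ⟨h, _⟩ | ⟨h, _⟩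
    · rw [htdef, h]
    · rw [htdef, h, show a * -Real.sin θ = -(a * Real.sin θ) by ring, Real.sinh_neg]; ring
  have hE : (2:ℝ) < Real.exp 1 := by nlinarith [Real.exp_one_gt_d9]
  have hE0 : (0:ℝ) < Real.exp 1 := by linarith
  show 1/(2*Real.exp 1) * Real.exp t ≤ A
  rcases le_or_gt (1/2) t with hcase | hcase
  · -- large |Im|: use sinh
    have hsh0 : 0 ≤ Real.sinh t := Real.sinh_nonneg_iff.mpr ht0
    have h1 : Real.sinh t ≤ A := by
      nlinarith [sq_nonneg (Real.sin (a * Real.cos θ))]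
    have h2 : 1/(2*Real.exp 1) * Real.exp t ≤ Real.sinh t := by
      rw [Real.sinh_eq]
      have huv : Real.exp t * Real.exp (-t) = 1 := by rw [← Real.exp_add]; simp
      have hw : Real.exp (1/2) ≤ Real.exp t := Real.exp_le_exp.mpr hcase
      have hww : Real.exp (1/2) * Real.exp (1/2) = Real.exp 1 := by
        rw [← Real.exp_add]; norm_num
      have hv0 : 0 < Real.exp (-t) := Real.exp_pos _
      have hw0 : 0 < Real.exp (1/2) := Real.exp_pos _
      have hu0 : 0 < Real.exp t := Real.exp_pos t
      have hu2 : Real.exp 1 ≤ Real.exp t * Real.exp t := by nlinarith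
      rw [div_mul_eq_mul_div, div_le_div_iff₀ (by positivity) two_pos]
      nlinarith [mul_pos hE0 hv0, mul_pos hu0 hv0]
    linarith
  · -- small |Im|: the real part dominates
    have hsinθ : |Real.sin θ| < 1/(2*a) := by
      rw [lt_div_iff₀ (by positivity)]
      nlinarith [abs_nonneg (Real.sin θ)]
    have hθ2 : |θ| ≤ Real.pi/2 := by
      by_contra hgt
      push_neg at hgt
      set q : ℝ := σ / R with hq
      have hq0 : 0 ≤ q := le_of_lt (div_pos hσ hR0)
      have hq2 : q ≤ 1/2 := by rw [hq, div_le_iff₀ hR0]; linarith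
      have harc : |θ| - Real.pi/2 ≤ Real.arcsin q := by linarith
      have hcosmono : Real.cos (Real.arcsin q) ≤ Real.cos (|θ| - Real.pi/2) :=
        Real.cos_le_cos_of_nonneg_of_le_pi (by linarith)
          (le_trans (Real.arcsin_le_pi_div_two q) (by linarith)) harc
      have hca : Real.cos (Real.arcsin q) = Real.sqrt (1 - q^2) := Real.cos_arcsin q
      have hsq : (1/2:ℝ) ≤ Real.sqrt (1 - q^2) := by
        have h1q : (0:ℝ) ≤ 1 - q^2 := by nlinarith
        nlinarith [Real.sq_sqrt h1q, Real.sqrt_nonneg (1 - q^2)]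
      have hsin_eq : Real.sin |θ| = Real.cos (|θ| - Real.pi/2) := by
        have h := Real.sin_add_pi_div_two (|θ| - Real.pi/2)
        rw [show |θ| - Real.pi/2 + Real.pi/2 = |θ| by ring] at h
        exact h
      have hpos : 0 ≤ Real.sin |θ| := by rw [hsin_eq]; linarith
      have habs_sin : |Real.sin θ| = Real.sin |θ| := by
        rcases abs_cases θ with ⟨h, _⟩ | ⟨h, _⟩
        · rw [h] at hpos ⊢; exact abs_of_nonneg hpos
        · rw [h] at hpos ⊢
          rw [Real.sin_neg] at hpos ⊢
          exact abs_of_nonpos (by linarith)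
      have hhalf : (1:ℝ)/2 ≤ |Real.sin θ| := by rw [habs_sin, hsin_eq]; linarith
      nlinarith
    have hcos0 : 0 ≤ Real.cos θ := by
      rw [abs_le] at hθ2
      exact Real.cos_nonneg_of_mem_Icc ⟨by linarith [hθ2.1], hθ2.2⟩
    set s : ℝ := a * (1 - Real.cos θ) with hs
    have hcos1 : Real.cos θ ≤ 1 := Real.cos_le_one θ
    have hs0 : 0 ≤ s := by nlinarith
    have h1c : 1 - Real.cos θ ≤ Real.sin θ ^ 2 := by
      nlinarith [Real.sin_sq_add_cos_sq θ]
    have hsin1 : |Real.sin θ| ≤ 1 :=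
      abs_le.mpr ⟨Real.neg_one_le_sin θ, Real.sin_le_one θ⟩
    have hs12 : s ≤ 1/2 := by
      nlinarith [sq_abs (Real.sin θ), abs_nonneg (Real.sin θ)]
    have hcoss : (1:ℝ)/2 ≤ Real.cos s := by
      have hmono : Real.cos (Real.pi/3) ≤ Real.cos s :=
        Real.cos_le_cos_of_nonneg_of_le_pi hs0 (by linarith) (by linarith)
      rwa [Real.cos_pi_div_three] at hmono
    have hsinX : Real.sin (a * Real.cos θ) = Real.cos s := by
      have hsa : Real.sin a = 1 := by
        rw [show a = Real.pi/2 + m * (2*Real.pi) by rw [hadef, hRdef]; ring,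
          Real.sin_add_nat_mul_two_pi, Real.sin_pi_div_two]
      have hca : Real.cos a = 0 := by
        rw [show a = Real.pi/2 + m * (2*Real.pi) by rw [hadef, hRdef]; ring,
          Real.cos_add_nat_mul_two_pi, Real.cos_pi_div_two]
      rw [show a * Real.cos θ = a - s by rw [hs]; ring, Real.sin_sub, hsa, hca]; ring
    have hA12 : (1:ℝ)/2 ≤ A := by
      nlinarith [sq_nonneg (Real.sinh (a * Real.sin θ))]
    have hexp : Real.exp t ≤ Real.exp 1 := Real.exp_le_exp.mpr (by linarith)
    rw [div_mul_eq_mul_div, one_mul, div_le_iff₀ (by positivity)]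
    nlinarith
end
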